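/- Let S = S₁ × ⋯ × Sₙ, n ≥ 2, where each Sᵢ is a finite antinegative semifield (every nonzero element is multiplicatively invertible) and at least two of the Sᵢ are not isomorphic to the Boolean semiring B. Then dim(Γ₁(S)) = |S₁|·|S₂|⋯|Sₙ| − (|S₁|−1)(|S₂|−1)⋯(|Sₙ|−1) − 2ⁿ + 1. -/

import Mathlib

/-- `x` is a zero-divisor of the commutative semiring `S`. -/
def IsZD {S : Type*} [CommSemiring S] (x : S) : Prop :=
  ∃ y : S, y ≠ 0 ∧ x * y = 0

/-- The total graph of a commutative semiring: distinct `x, y` are adjacent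
iff `x + y` is a zero-divisor. -/
def totalGraph (S : Type*) [CommSemiring S] : SimpleGraph S where
  Adj x y := x ≠ y ∧ IsZD (x + y)
  symm := by
    constructor
    intro x y h
    exact ⟨h.1.symm, by rw [add_comm]; exact h.2⟩
  loopless := by constructor; intro x h; exact h.1 rfl

/-- The induced subgraph of the total graph on the set of zero-divisors. -/
def gamma1 (S : Type*) [CommSemiring S] : SimpleGraph {x : S // IsZD x} :=
  SimpleGraph.comap Subtype.val (totalGraph S)

/-- A resolving set: distinct vertices have distinct distance vectors to `W`. -/
def IsResolving {V : Type*} (G : SimpleGraph V) (W : Set V) : Prop :=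
  ∀ x y : V, (∀ w ∈ W, G.dist x w = G.dist y w) → x = y

/-- The metric dimension: the least cardinality of a resolving set. -/
noncomputable def metricDim {V : Type*} (G : SimpleGraph V) : ℕ :=
  sInf {k | ∃ W : Set V, W.Finite ∧ W.ncard = k ∧ IsResolving G W}

/-- The Boolean semiring `𝔹 = {0,1}` with `1 + 1 = 1`. -/
inductive BB : Type
  | zero : BB
  | one : BB
deriving DecidableEq

instance : Zero BB := ⟨.zero⟩
instance : One BB := ⟨.one⟩
instance : Add BB := ⟨fun x y => match x, y with | .zero, y => y | .one, _ => .one⟩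
instance : Mul BB := ⟨fun x y => match x, y with | .zero, _ => .zero | .one, y => y⟩
instance : Fintype BB := ⟨{.zero, .one}, by intro x; cases x <;> decide⟩

instance : CommSemiring BB where
  add_assoc := by decide
  zero_add := by decide
  add_zero := by decide
  add_comm := by decide
  mul_assoc := by decide
  one_mul := by decide
  mul_one := by decide
  left_distrib := by decide
  right_distrib := by decide
  zero_mul := by decide
  mul_zero := by decide
  mul_comm := by decide
  nsmul := nsmulRec
  npow := npowRec

/-!
Two distinct zero-divisors of `S = ∏ Sᵢ` are adjacent in `Γ₁(S)` exactly when they vanish at a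
common coordinate (by antinegativity), and otherwise they are at distance `2` through `0`. So
distances only depend on zero sets, and vertices with the same zero set are twins: a resolving
set misses at most one vertex from each of the `2ⁿ - 1` zero-set classes, whence
`dim Γ₁(S) ≥ |Z(S)| - (2ⁿ - 1)`. Conversely, all vertices but the `{0,1}`-vectors form a resolving
set: a vertex vanishing exactly at `i` with a coordinate outside `{0,1}` (which exists since two
factors are not `𝔹`) is at distance `1` from the `{0,1}`-vectors vanishing at `i` and at
distance `2` from the others.
-/

namespace SimpleGraph

variable {V : Type*} {G : SimpleGraph V}

theorem metricDim_eq_ncard [Finite V] {W : Set V} (hW : IsResolving G W)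
    (hmin : ∀ W' : Set V, IsResolving G W' → W.ncard ≤ W'.ncard) : metricDim G = W.ncard :=
  le_antisymm (Nat.sInf_le ⟨W, W.toFinite, rfl, hW⟩)
    (le_csInf ⟨_, W, W.toFinite, rfl, hW⟩ fun _ ⟨W', _, hcard, hW'⟩ => hcard ▸ hmin W' hW')

theorem IsResolving.injOn_compl {T : Type*} {W : Set V} (hW : IsResolving G W) {f : V → T}
    (htwin : ∀ u v, f u = f v → ∀ w, w ≠ u → w ≠ v → G.dist u w = G.dist v w) :
    Set.InjOn f Wᶜ := fun u hu v hv huv =>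
  hW u v fun w hw => htwin u v huv w (fun h => hu (h ▸ hw)) fun h => hv (h ▸ hw)

theorem Connected.isResolving_of_compl (hG : G.Connected) {W : Set V}
    (h : ∀ x ∈ Wᶜ, ∀ y ∈ Wᶜ, (∀ w ∈ W, G.dist x w = G.dist y w) → x = y) :
    IsResolving G W := by
  intro x y hxy
  by_cases hx : x ∈ W
  · exact (hG.dist_eq_zero_iff.1 ((hxy x hx).symm.trans dist_self)).symm
  by_cases hy : y ∈ W
  · exact hG.dist_eq_zero_iff.1 ((hxy y hy).trans dist_self)
  exact h x hx y hy hxy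

end SimpleGraph

theorem Nat.card_subtype_ne {α : Type*} [Finite α] (a : α) :
    Nat.card {x // x ≠ a} = Nat.card α - 1 := by
  rw [← Set.ncard_singleton a, ← Set.ncard_compl]
  rfl

theorem Nat.card_subtype_add_card_subtype_not {α : Type*} [Finite α] (p : α → Prop) :
    Nat.card {x // p x} + Nat.card {x // ¬ p x} = Nat.card α :=
  Set.ncard_add_ncard_compl {x | p x}

theorem Set.ncard_setOf_nonempty (ι : Type*) [Finite ι] :
    {A : Set ι | A.Nonempty}.ncard = 2 ^ Nat.card ι - 1 := by
  have := Fintype.ofFinite ι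
  have hcompl : {A : Set ι | A.Nonempty} = {∅}ᶜ := by
    ext A; simp [Set.nonempty_iff_ne_empty]
  rw [hcompl, Set.ncard_compl, Set.ncard_singleton, Nat.card_eq_fintype_card,
    Fintype.card_set, Nat.card_eq_fintype_card]

theorem isZD_iff_eq_zero {R : Type*} [CommSemiring R] [Nontrivial R]
    (hunit : ∀ x : R, x ≠ 0 → IsUnit x) {a : R} : IsZD a ↔ a = 0 := by
  refine ⟨fun ⟨y, hy, hay⟩ => ?_, fun ha => ⟨1, one_ne_zero, by rw [ha, zero_mul]⟩⟩
  by_contra ha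
  exact hy ((hunit a ha).mul_right_eq_zero.1 hay)

theorem isZD_pi_iff {ι : Type*} {S : ι → Type*} [∀ i, CommSemiring (S i)] {x : ∀ i, S i} :
    IsZD x ↔ ∃ i, IsZD (x i) := by
  classical
  constructor
  · rintro ⟨y, hy, hxy⟩
    obtain ⟨i, hi⟩ := Function.ne_iff.1 hy
    exact ⟨i, y i, hi, congrFun hxy i⟩
  · rintro ⟨i, y, hy, hxy⟩
    refine ⟨Pi.single i y, fun h => hy (by simpa using congrFun h i), ?_⟩
    rw [← Pi.single_mul_right, hxy, Pi.single_zero]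

theorem exists_ne_zero_ne_one_of_not_boolean {R : Type*} [CommSemiring R] [Nontrivial R]
    (hanti : ∀ a b : R, a + b = 0 → a = 0 ∧ b = 0) (hR : ¬ Nonempty (R ≃+* BB)) :
    ∃ c : R, c ≠ 0 ∧ c ≠ 1 := by
  by_contra! h
  have hR01 : ∀ x : R, x = 0 ∨ x = 1 := fun x => or_iff_not_imp_left.2 (h x)
  have one_add_one : (1 : R) + 1 = 1 :=
    (hR01 _).resolve_left fun h0 => one_ne_zero (hanti 1 1 h0).1
  let f : BB →+* R :=
    { toFun := fun b => match b with | .zero => 0 | .one => 1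
      map_one' := rfl
      map_zero' := rfl
      map_mul' := by rintro (_ | _) (_ | _) <;> simp
      map_add' := by rintro (_ | _) (_ | _) <;> simp [one_add_one] }
  refine hR ⟨(RingEquiv.ofBijective f ⟨fun a b hab => ?_, fun x => ?_⟩).symm⟩
  · rcases a <;> rcases b <;> first | rfl | simp [f] at hab
  · rcases hR01 x with rfl | rfl
    exacts [⟨.zero, rfl⟩, ⟨.one, rfl⟩]

def zeroSet {ι : Type*} {S : ι → Type*} [∀ i, Zero (S i)] (x : ∀ i, S i) : Set ι :=
  {i | x i = 0}

open Classical in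
noncomputable def zeroOneVec {ι : Type*} {S : ι → Type*} [∀ i, Zero (S i)] [∀ i, One (S i)]
    (A : Set ι) : ∀ i, S i :=
  fun i => if i ∈ A then 0 else 1

theorem zeroSet_zeroOneVec {ι : Type*} {S : ι → Type*} [∀ i, Zero (S i)] [∀ i, One (S i)]
    [∀ i, NeZero (1 : S i)] (A : Set ι) : zeroSet (zeroOneVec A : ∀ i, S i) = A := by
  ext i
  by_cases h : i ∈ A <;> simp [zeroSet, zeroOneVec, h]

def zeroOneVertices {ι : Type*} {S : ι → Type*} [∀ i, CommSemiring (S i)] :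
    Set {x : ∀ i, S i // IsZD x} :=
  {v | v.1 = zeroOneVec (zeroSet v.1)}

section ProductOfSemifields

open SimpleGraph

variable {ι : Type*} {S : ι → Type*} [∀ i, CommSemiring (S i)] [∀ i, Nontrivial (S i)]
  (hanti : ∀ i, ∀ a b : S i, a + b = 0 → a = 0 ∧ b = 0)
  (hunit : ∀ i, ∀ x : S i, x ≠ 0 → IsUnit x)
  (hsep : ∀ i, ∃ k ≠ i, ∃ c : S k, c ≠ 0 ∧ c ≠ 1)

include hunit in
theorem isZD_pi_iff_zeroSet_nonempty {x : ∀ i, S i} : IsZD x ↔ (zeroSet x).Nonempty :=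
  isZD_pi_iff.trans (exists_congr fun i => isZD_iff_eq_zero (hunit i))

include hunit in
theorem card_isZD_add_prod [Fintype ι] [∀ i, Finite (S i)] :
    Nat.card {x : ∀ i, S i // IsZD x} + ∏ i, (Nat.card (S i) - 1) = ∏ i, Nat.card (S i) := by
  have hnonzero : {x : ∀ i, S i // ¬ IsZD x} ≃ ∀ i, {a : S i // a ≠ 0} :=
    (Equiv.subtypeEquivRight fun x => by
      simp [isZD_pi_iff_zeroSet_nonempty hunit, Set.Nonempty, zeroSet]).trans
      (Equiv.subtypePiEquivPi (p := fun i (a : S i) => a ≠ 0))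
  have hprod : ∏ i, (Nat.card (S i) - 1) = Nat.card {x : ∀ i, S i // ¬ IsZD x} := by
    rw [Nat.card_congr hnonzero, Nat.card_pi]
    exact Finset.prod_congr rfl fun i _ => (Nat.card_subtype_ne (0 : S i)).symm
  rw [hprod, Nat.card_subtype_add_card_subtype_not, Nat.card_pi]

include hanti hunit in
theorem gamma1_adj_iff {x y : {x : ∀ i, S i // IsZD x}} :
    (gamma1 (∀ i, S i)).Adj x y ↔ x ≠ y ∧ (zeroSet x.1 ∩ zeroSet y.1).Nonempty := by
  change x.1 ≠ y.1 ∧ IsZD (x.1 + y.1) ↔ _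
  rw [isZD_pi_iff_zeroSet_nonempty hunit, Subtype.val_injective.ne_iff]
  refine and_congr_right fun _ => exists_congr fun i => ⟨hanti i _ _, fun h => ?_⟩
  change x.1 i + y.1 i = 0
  rw [h.1, h.2, add_zero]

include hanti hunit in
theorem gamma1_dist_eq_one {x y : {x : ∀ i, S i // IsZD x}} (hxy : x ≠ y)
    (h : (zeroSet x.1 ∩ zeroSet y.1).Nonempty) : (gamma1 (∀ i, S i)).dist x y = 1 :=
  dist_eq_one_iff_adj.2 ((gamma1_adj_iff hanti hunit).2 ⟨hxy, h⟩)

include hunit in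
theorem ncard_zeroOneVertices [Finite ι] :
    (zeroOneVertices : Set {x : ∀ i, S i // IsZD x}).ncard = 2 ^ Nat.card ι - 1 := by
  rw [← Set.ncard_setOf_nonempty ι, ← Set.InjOn.ncard_image (f := fun v => zeroSet v.1)]
  · congr 1
    ext A
    refine ⟨?_, fun hA => ?_⟩
    · rintro ⟨v, -, rfl⟩
      exact (isZD_pi_iff_zeroSet_nonempty hunit).1 v.2
    · have hA' : IsZD (zeroOneVec A : ∀ i, S i) :=
        (isZD_pi_iff_zeroSet_nonempty hunit).2 (by rwa [zeroSet_zeroOneVec])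
      refine ⟨⟨zeroOneVec A, hA'⟩, ?_, zeroSet_zeroOneVec A⟩
      change zeroOneVec A = zeroOneVec (zeroSet (zeroOneVec A))
      rw [zeroSet_zeroOneVec]
  · intro u (hu : u.1 = _) v (hv : v.1 = _) (huv : zeroSet u.1 = zeroSet v.1)
    exact Subtype.ext (by rw [hu, hv, huv])

include hunit hsep in
theorem exists_zeroSet_eq_singleton_notMem_zeroOneVertices (i : ι) :
    ∃ w : {x : ∀ i, S i // IsZD x}, w ∉ zeroOneVertices ∧ zeroSet w.1 = {i} := by
  classical
  obtain ⟨k, hki, c, hc0, hc1⟩ := hsep i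
  set x : ∀ i, S i := Function.update (zeroOneVec {i}) k c
  have hx : zeroSet x = {i} := by
    ext j
    by_cases hjk : j = k
    · subst hjk; simp [x, zeroSet, hc0, hki]
    · simpa [x, zeroSet, hjk] using Set.ext_iff.1 (zeroSet_zeroOneVec (S := S) {i}) j
  refine ⟨⟨x, (isZD_pi_iff_zeroSet_nonempty hunit).2 (hx ▸ Set.singleton_nonempty i)⟩, ?_, hx⟩
  intro (h : x = zeroOneVec (zeroSet x))
  have := congrFun h k
  simp [x, hx, zeroOneVec, hki, hc1] at this

variable [Nonempty ι]

include hunit in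
theorem isZD_zero : IsZD (0 : ∀ i, S i) :=
  (isZD_pi_iff_zeroSet_nonempty hunit).2 ⟨Classical.arbitrary ι, rfl⟩

include hanti hunit in
theorem gamma1_adj_zero {x : {x : ∀ i, S i // IsZD x}} (hx : x.1 ≠ 0) :
    (gamma1 (∀ i, S i)).Adj x ⟨0, isZD_zero hunit⟩ := by
  refine (gamma1_adj_iff hanti hunit).2 ⟨fun h => hx (congrArg Subtype.val h), ?_⟩
  obtain ⟨i, hi⟩ := (isZD_pi_iff_zeroSet_nonempty hunit).1 x.2
  exact ⟨i, hi, rfl⟩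

include hanti hunit in
theorem gamma1_connected : (gamma1 (∀ i, S i)).Connected := by
  have hreach (x) : (gamma1 (∀ i, S i)).Reachable x ⟨0, isZD_zero hunit⟩ := by
    by_cases hx : x.1 = 0
    · rw [show x = ⟨0, isZD_zero hunit⟩ from Subtype.ext hx]
    · exact (gamma1_adj_zero hanti hunit hx).reachable
  have : Nonempty {x : ∀ i, S i // IsZD x} := ⟨⟨0, isZD_zero hunit⟩⟩
  exact .mk fun x y => (hreach x).trans (hreach y).symm

include hanti hunit in
theorem gamma1_dist_eq_two {x y : {x : ∀ i, S i // IsZD x}} (hxy : x ≠ y)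
    (h : ¬ (zeroSet x.1 ∩ zeroSet y.1).Nonempty) : (gamma1 (∀ i, S i)).dist x y = 2 := by
  have hx : x.1 ≠ 0 := fun hx => h <| by
    simpa [zeroSet, hx] using (isZD_pi_iff_zeroSet_nonempty hunit).1 y.2
  have hy : y.1 ≠ 0 := fun hy => h <| by
    simpa [zeroSet, hy] using (isZD_pi_iff_zeroSet_nonempty hunit).1 x.2
  have hle : (gamma1 (∀ i, S i)).dist x y ≤ 2 :=
    dist_le ((gamma1_adj_zero hanti hunit hx).toWalk.append
      (gamma1_adj_zero hanti hunit hy).symm.toWalk)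
  have hpos : 0 < (gamma1 (∀ i, S i)).dist x y :=
    (gamma1_connected hanti hunit).pos_dist_of_ne hxy
  have hne1 : (gamma1 (∀ i, S i)).dist x y ≠ 1 := fun h1 =>
    h ((gamma1_adj_iff hanti hunit).1 (dist_eq_one_iff_adj.1 h1)).2
  omega

include hanti hunit in
theorem gamma1_dist_congr {u v w : {x : ∀ i, S i // IsZD x}} (huv : zeroSet u.1 = zeroSet v.1)
    (hu : w ≠ u) (hv : w ≠ v) : (gamma1 (∀ i, S i)).dist u w = (gamma1 (∀ i, S i)).dist v w := by
  by_cases h : (zeroSet u.1 ∩ zeroSet w.1).Nonempty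
  · rw [gamma1_dist_eq_one hanti hunit hu.symm h, gamma1_dist_eq_one hanti hunit hv.symm (huv ▸ h)]
  · rw [gamma1_dist_eq_two hanti hunit hu.symm h, gamma1_dist_eq_two hanti hunit hv.symm (huv ▸ h)]

include hanti hunit in
theorem ncard_compl_le_of_isResolving [Finite ι] {W : Set {x : ∀ i, S i // IsZD x}}
    (hW : IsResolving (gamma1 (∀ i, S i)) W) : Wᶜ.ncard ≤ 2 ^ Nat.card ι - 1 := by
  rw [← Set.ncard_setOf_nonempty ι]
  exact Set.ncard_le_ncard_of_injOn (fun v => zeroSet v.1)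
    (fun v _ => (isZD_pi_iff_zeroSet_nonempty hunit).1 v.2)
    (hW.injOn_compl fun u v huv w hu hv => gamma1_dist_congr hanti hunit huv hu hv)

include hanti hunit hsep in
theorem isResolving_compl_zeroOneVertices :
    IsResolving (gamma1 (∀ i, S i)) zeroOneVerticesᶜ := by
  have hsubset : ∀ x ∈ zeroOneVertices, ∀ y ∈ zeroOneVertices,
      (∀ w ∈ zeroOneVerticesᶜ, (gamma1 (∀ i, S i)).dist x w = (gamma1 (∀ i, S i)).dist y w) →
      zeroSet x.1 ⊆ zeroSet y.1 := by
    intro x hx y hy hd i hxi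
    by_contra hyi
    obtain ⟨w, hw, hwi⟩ := exists_zeroSet_eq_singleton_notMem_zeroOneVertices hunit hsep i
    have hx1 : (zeroSet x.1 ∩ zeroSet w.1).Nonempty := ⟨i, hxi, hwi ▸ rfl⟩
    have hy2 : ¬ (zeroSet y.1 ∩ zeroSet w.1).Nonempty := by
      rintro ⟨j, hyj, hwj⟩
      rw [hwi, Set.mem_singleton_iff] at hwj
      exact hyi (hwj ▸ hyj)
    have hxw : x ≠ w := fun h => hw (h ▸ hx)
    have hyw : y ≠ w := fun h => hw (h ▸ hy)
    have hd_w := hd w hw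
    rw [gamma1_dist_eq_one hanti hunit hxw hx1, gamma1_dist_eq_two hanti hunit hyw hy2] at hd_w
    omega
  refine (gamma1_connected hanti hunit).isResolving_of_compl fun x hx y hy hd => ?_
  rw [compl_compl] at hx hy
  have hxy := (hsubset x hx y hy hd).antisymm (hsubset y hy x hx fun w hw => (hd w hw).symm)
  exact Subtype.ext (by rw [hx, hy, hxy])

include hanti hunit hsep in
theorem metricDim_gamma1_pi_add [Finite ι] [∀ i, Finite (S i)] :
    metricDim (gamma1 (∀ i, S i)) + (2 ^ Nat.card ι - 1) = Nat.card {x : ∀ i, S i // IsZD x} := by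
  rw [SimpleGraph.metricDim_eq_ncard (isResolving_compl_zeroOneVertices hanti hunit hsep)
    fun W hW => ?_]
  · rw [← ncard_zeroOneVertices hunit]
    exact Set.ncard_compl_add_ncard _
  · have h₁ := Set.ncard_add_ncard_compl W
    have h₂ := Set.ncard_add_ncard_compl (zeroOneVertices : Set {x : ∀ i, S i // IsZD x})
    have h₃ := ncard_compl_le_of_isResolving hanti hunit hW
    have h₄ := ncard_zeroOneVertices (S := S) hunit
    omega

end ProductOfSemifields

theorem stmt14_general {n : ℕ} {S : Fin n → Type*}
    [∀ i, CommSemiring (S i)] [∀ i, Fintype (S i)] [∀ i, Nontrivial (S i)]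
    (anti : ∀ i, ∀ a b : S i, a + b = 0 → a = 0 ∧ b = 0)
    (semifield : ∀ i, ∀ x : S i, x ≠ 0 → IsUnit x)
    (hB : ∃ i j : Fin n, i ≠ j ∧ ¬ Nonempty (S i ≃+* BB) ∧ ¬ Nonempty (S j ≃+* BB)) :
    (metricDim (gamma1 (∀ i, S i)) : ℤ) =
      (∏ i, (Nat.card (S i) : ℤ)) - (∏ i, ((Nat.card (S i) : ℤ) - 1)) - 2 ^ n + 1 := by
  obtain ⟨p, q, hpq, hp, hq⟩ := hB
  have : Nonempty (Fin n) := ⟨p⟩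
  have hsep (i : Fin n) : ∃ k ≠ i, ∃ c : S k, c ≠ 0 ∧ c ≠ 1 := by
    by_cases hip : i = p
    · exact ⟨q, hip ▸ hpq.symm, exists_ne_zero_ne_one_of_not_boolean (anti q) hq⟩
    · exact ⟨p, Ne.symm hip, exists_ne_zero_ne_one_of_not_boolean (anti p) hp⟩
  have hdim := metricDim_gamma1_pi_add anti semifield hsep
  have hcard := card_isZD_add_prod (S := S) semifield
  rw [Nat.card_fin] at hdim
  have hpow : 1 ≤ 2 ^ n := Nat.one_le_two_pow
  have hcard_pos (i : Fin n) : 1 ≤ Nat.card (S i) := Nat.card_pos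
  zify [hpow, hcard_pos] at hdim hcard
  linarith

theorem stmt14 {n : ℕ} (hn : 2 ≤ n) {S : Fin n → Type*}
    [∀ i, CommSemiring (S i)] [∀ i, Fintype (S i)] [∀ i, Nontrivial (S i)]
    (anti : ∀ i, ∀ a b : S i, a + b = 0 → a = 0 ∧ b = 0)
    (semifield : ∀ i, ∀ x : S i, x ≠ 0 → IsUnit x)
    (hB : ∃ i j : Fin n, i ≠ j ∧ ¬ Nonempty (S i ≃+* BB) ∧ ¬ Nonempty (S j ≃+* BB)) :
    (metricDim (gamma1 (∀ i, S i)) : ℤ) =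
      (∏ i, (Nat.card (S i) : ℤ)) - (∏ i, ((Nat.card (S i) : ℤ) - 1)) - 2 ^ n + 1 :=
  stmt14_general anti semifield hB
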